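/- Suppose Σ_{k=1}^∞ α_k(1−α_k) = ∞ and the sequence of iterates (x_k) is bounded. Then there exists x̄ ∈ C with T x̄ = x̄ such that x_k converges weakly to x̄. -/

import Mathlib

/-!
Let `d k = ‖x k - T (x k)‖`. For a fixed point `p ∈ C` of `T`,
`‖x (k+1) - p‖² + α (1 - α) (d k)² ≤ ‖x k - p‖²`, and `d` is nonincreasing, so
`Σ α_k (1 - α_k) = ∞` forces `d k → 0`.

A fixed point exists: the asymptotic radius `F z = limsup ‖x k - z‖²` is 2-strongly convex and
continuous, so it has a minimizer on `C`; and `F (T z) ≤ F z` on `C`, because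
`‖x (k+1) - T z‖² ≤ (1 - α) ‖x k - T z‖² + α ‖x k - z‖²` and `Σ α_k = ∞`. So `T` maps the
minimizer to a minimizer, which by strict convexity is the same point.

Opial's argument then gives weak convergence. Weak limits along ultrafilters exist by
Banach–Alaoglu. Each one lies in `C`, since closed convex sets are weakly closed, and is fixed by
`T`, since `d k → 0`. If `‖x k - y₀‖` and `‖x k - y₁‖` both converge, then `⟪x k, y₀ - y₁⟫`
converges, so two such weak cluster points coincide.
-/

open Filter Topology Finset
open scoped RealInnerProductSpace

theorem tendsto_zero_of_antitone_of_sum_mul_le {β d : ℕ → ℝ} {B : ℝ} (hd : Antitone d)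
    (hd₀ : ∀ k, 0 ≤ d k) (hβ : ∀ k, 0 ≤ β k)
    (hdiv : Tendsto (fun n => ∑ k ∈ range n, β k) atTop atTop)
    (hsum : ∀ n, ∑ k ∈ range n, β k * d k ≤ B) : Tendsto d atTop (𝓝 0) := by
  have hbdd : BddBelow (Set.range d) := ⟨0, Set.forall_mem_range.2 hd₀⟩
  have hL₀ : 0 ≤ ⨅ k, d k := le_ciInf hd₀
  suffices hL : ⨅ k, d k ≤ 0 from le_antisymm hL hL₀ ▸ tendsto_atTop_ciInf hd hbdd
  by_contra! hL
  obtain ⟨n, hn⟩ := (hdiv.eventually_gt_atTop (B / ⨅ k, d k)).exists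
  have : (⨅ k, d k) * ∑ k ∈ range n, β k ≤ B := by
    rw [mul_sum]
    refine (sum_le_sum fun k _ => ?_).trans (hsum n)
    rw [mul_comm]
    exact mul_le_mul_of_nonneg_left (ciInf_le hbdd k) (hβ k)
  rw [div_lt_iff₀ hL] at hn
  linarith

theorem tendsto_zero_of_le_one_sub_mul {β e : ℕ → ℝ} (he : ∀ k, 0 ≤ e k) (hβ : ∀ k, 0 ≤ β k)
    (hdiv : Tendsto (fun n => ∑ k ∈ range n, β k) atTop atTop)
    (hrec : ∀ k, e (k + 1) ≤ (1 - β k) * e k) : Tendsto e atTop (𝓝 0) := by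
  have hstep : ∀ k, β k * e k ≤ e k - e (k + 1) := fun k => by linarith [hrec k]
  refine tendsto_zero_of_antitone_of_sum_mul_le (B := e 0) ?_ he hβ hdiv fun n => ?_
  · exact antitone_nat_of_succ_le fun k => by nlinarith [hstep k, hβ k, he k]
  · calc ∑ k ∈ range n, β k * e k ≤ ∑ k ∈ range n, (e k - e (k + 1)) :=
          sum_le_sum fun k _ => hstep k
      _ = e 0 - e n := sum_range_sub' e n
      _ ≤ e 0 := by linarith [he n]

theorem tendsto_sum_range_add_atTop {β : ℕ → ℝ} (m : ℕ)
    (hdiv : Tendsto (fun n => ∑ k ∈ range n, β k) atTop atTop) :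
    Tendsto (fun n => ∑ k ∈ range n, β (k + m)) atTop atTop := by
  have h := tendsto_atTop_add_const_right _ (-∑ k ∈ range m, β k)
    ((tendsto_add_atTop_iff_nat m).2 hdiv)
  refine h.congr fun n => ?_
  rw [add_comm n m, sum_range_add]
  simp [add_comm]

theorem limsup_le_limsup_of_le_one_sub_mul_add_mul {β b c : ℕ → ℝ}
    (hβ : ∀ k, β k ∈ Set.Icc (0 : ℝ) 1)
    (hdiv : Tendsto (fun n => ∑ k ∈ range n, β k) atTop atTop)
    (hb : BddBelow (Set.range b)) (hc : BddAbove (Set.range c))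
    (hrec : ∀ k, b (k + 1) ≤ (1 - β k) * b k + β k * c k) :
    limsup b atTop ≤ limsup c atTop := by
  refine le_of_forall_gt_imp_ge_of_dense fun R hR => ?_
  obtain ⟨m, hm⟩ :=
    eventually_atTop.1 (eventually_lt_of_limsup_lt hR hc.isBoundedUnder_of_range)
  -- once `c k < R`, the excess `(b k - R)⁺` contracts by the factor `1 - β k`
  set e : ℕ → ℝ := fun k => max (b k - R) 0
  have he : Tendsto (fun j => e (j + m)) atTop (𝓝 0) := by
    refine tendsto_zero_of_le_one_sub_mul (fun j => le_max_right _ _) (fun j => (hβ _).1)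
      (tendsto_sum_range_add_atTop m hdiv) fun j => ?_
    obtain ⟨hβ₀, hβ₁⟩ := hβ (j + m)
    have hcR := hm (j + m) (Nat.le_add_left m j)
    have hrec' := hrec (j + m)
    simp only [e, Nat.add_right_comm j 1 m]
    refine max_le ?_ (mul_nonneg (by linarith) (le_max_right _ _))
    nlinarith [le_max_left (b (j + m) - R) 0]
  have hbe : ∀ k, b k ≤ R + e k := fun k => by
    simp only [e]; linarith [le_max_left (b k - R) 0]
  have hRe : Tendsto (fun k => R + e k) atTop (𝓝 R) := by
    simpa using ((tendsto_add_atTop_iff_nat m).1 he).const_add R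
  calc limsup b atTop ≤ limsup (fun k => R + e k) atTop :=
        limsup_le_limsup (Eventually.of_forall hbe) hb.isBoundedUnder_of_range.isCoboundedUnder_le
          hRe.isBoundedUnder_le
    _ = R := hRe.limsup_eq

theorem limsup_le_mul_add_mul_add {ι : Type*} {l : Filter ι} {u v w : ι → ℝ} {a b c : ℝ}
    (ha : 0 ≤ a) (hb : 0 ≤ b) (hu : IsBoundedUnder (· ≤ ·) l u) (hv : IsBoundedUnder (· ≤ ·) l v)
    (hw : IsCoboundedUnder (· ≤ ·) l w) (h : ∀ i, w i ≤ a * u i + b * v i + c) :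
    limsup w l ≤ a * limsup u l + b * limsup v l + c := by
  set X := a * limsup u l + b * limsup v l + c
  have hlim : Tendsto (fun ε => X + (a + b) * ε) (𝓝[>] 0) (𝓝 X) := by
    refine tendsto_nhdsWithin_of_tendsto_nhds ?_
    simpa using (tendsto_id (x := 𝓝 (0 : ℝ))).const_mul (a + b) |>.const_add X
  refine ge_of_tendsto hlim (eventually_nhdsWithin_of_forall fun ε (hε : 0 < ε) => ?_)
  refine limsup_le_of_le hw ?_
  filter_upwards [eventually_lt_of_limsup_lt (lt_add_of_pos_right _ hε) hu,
    eventually_lt_of_limsup_lt (lt_add_of_pos_right _ hε) hv] with i hui hvi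
  nlinarith [h i, mul_le_mul_of_nonneg_left hui.le ha, mul_le_mul_of_nonneg_left hvi.le hb]

section Hilbert

variable {H : Type*} [NormedAddCommGroup H] [InnerProductSpace ℝ H]

theorem norm_smul_add_smul_sq {a b : ℝ} (hab : a + b = 1) (u v : H) :
    ‖a • u + b • v‖ ^ 2 = a * ‖u‖ ^ 2 + b * ‖v‖ ^ 2 - a * b * ‖u - v‖ ^ 2 := by
  rw [norm_add_sq_real, norm_sub_sq_real, norm_smul, norm_smul, real_inner_smul_left,
    real_inner_smul_right, mul_pow, mul_pow, Real.norm_eq_abs, Real.norm_eq_abs, sq_abs, sq_abs]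
  obtain rfl := eq_sub_of_add_eq hab
  ring

def WeakTendsto {ι : Type*} (x : ι → H) (l : Filter ι) (y : H) : Prop :=
  ∀ v : H, Tendsto (fun i => ⟪x i, v⟫) l (𝓝 ⟪y, v⟫)

variable {ι : Type*} {x : ι → H} {l : Filter ι} {y : H} {M : ℝ}

open InnerProductSpace in
theorem exists_weakTendsto_of_norm_le [CompleteSpace H] (𝒰 : Ultrafilter ι)
    (hM : ∀ i, ‖x i‖ ≤ M) : ∃ y, WeakTendsto x 𝒰 y := by
  set φ : ι → WeakDual ℝ H := fun i => StrongDual.toWeakDual (toDual ℝ H (x i))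
  have hball : (𝒰.map φ : Filter (WeakDual ℝ H))
      ≤ 𝓟 (WeakDual.toStrongDual ⁻¹' Metric.closedBall 0 M) := by
    rw [Ultrafilter.coe_map, le_principal_iff]
    exact mem_map.2 (univ_mem' fun i => by simpa [φ] using hM i)
  obtain ⟨ψ, -, hψ⟩ := (WeakDual.isCompact_closedBall 0 M).ultrafilter_le_nhds _ hball
  refine ⟨(toDual ℝ H).symm (WeakDual.toStrongDual ψ), fun v => ?_⟩
  rw [toDual_symm_apply]
  exact (WeakDual.eval_continuous v).continuousAt.tendsto.comp hψ

open InnerProductSpace in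
theorem WeakTendsto.mem_of_isClosed_of_convex [CompleteSpace H] [l.NeBot] {C : Set H}
    (hC : IsClosed C) (hCconv : Convex ℝ C) (hxC : ∀ i, x i ∈ C) (h : WeakTendsto x l y) :
    y ∈ C := by
  by_contra hy
  obtain ⟨f, u, hfC, hfy⟩ := geometric_hahn_banach_closed_point hCconv hC hy
  have hf : ∀ z, f z = ⟪z, (toDual ℝ H).symm f⟫ := fun z => by
    rw [real_inner_comm, toDual_symm_apply]
  have hlim : f y ≤ u :=
    le_of_tendsto (by simpa only [hf] using h ((toDual ℝ H).symm f))
      (Eventually.of_forall fun i => (hfC _ (hxC i)).le)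
  linarith

theorem WeakTendsto.map_eq [l.NeBot] {C : Set H} {T : H → H}
    (hT : ∀ u ∈ C, ∀ v ∈ C, ‖T u - T v‖ ≤ ‖u - v‖) (hxC : ∀ i, x i ∈ C) (hy : y ∈ C)
    (hM : ∀ i, ‖x i‖ ≤ M) (hd : Tendsto (fun i => ‖x i - T (x i)‖) l (𝓝 0))
    (h : WeakTendsto x l y) : T y = y := by
  have hle : ∀ i, ‖y - T y‖ ^ 2 + 2 * ⟪x i - y, y - T y⟫
      ≤ ‖x i - T (x i)‖ ^ 2 + 2 * ‖x i - T (x i)‖ * (M + ‖y‖) := fun i => by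
    have hexp : ‖x i - T y‖ ^ 2 = ‖x i - y‖ ^ 2 + 2 * ⟪x i - y, y - T y⟫ + ‖y - T y‖ ^ 2 := by
      rw [← norm_add_sq_real, sub_add_sub_cancel]
    have htri : ‖x i - T y‖ ≤ ‖x i - T (x i)‖ + ‖x i - y‖ :=
      calc ‖x i - T y‖ ≤ ‖x i - T (x i)‖ + ‖T (x i) - T y‖ :=
            norm_sub_le_norm_sub_add_norm_sub _ _ _
        _ ≤ ‖x i - T (x i)‖ + ‖x i - y‖ := by gcongr; exact hT _ (hxC i) _ hy
    have hxy : ‖x i - y‖ ≤ M + ‖y‖ := (norm_sub_le _ _).trans (by linarith [hM i])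
    nlinarith [norm_nonneg (x i - T y), norm_nonneg (x i - T (x i)), norm_nonneg (x i - y)]
  have hlhs : Tendsto (fun i => ‖y - T y‖ ^ 2 + 2 * ⟪x i - y, y - T y⟫) l
      (𝓝 (‖y - T y‖ ^ 2 + 2 * 0)) := by
    refine tendsto_const_nhds.add (Tendsto.const_mul 2 ?_)
    simpa [inner_sub_left] using (h (y - T y)).sub_const ⟪y, y - T y⟫
  have hrhs : Tendsto (fun i => ‖x i - T (x i)‖ ^ 2 + 2 * ‖x i - T (x i)‖ * (M + ‖y‖)) l
      (𝓝 (0 ^ 2 + 2 * 0 * (M + ‖y‖))) :=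
    (hd.pow 2).add ((hd.const_mul 2).mul_const _)
  have hD : ‖y - T y‖ ^ 2 ≤ 0 := by simpa using le_of_tendsto_of_tendsto' hlhs hrhs hle
  have : y - T y = 0 := by simpa using hD
  exact (sub_eq_zero.1 this).symm

theorem WeakTendsto.eq_of_tendsto_norm_sub {l₀ l₁ : Filter ι} [l₀.NeBot] [l₁.NeBot]
    {y₀ y₁ : H} {r₀ r₁ : ℝ} (h₀ : WeakTendsto x l₀ y₀) (h₁ : WeakTendsto x l₁ y₁)
    (hl₀ : l₀ ≤ l) (hl₁ : l₁ ≤ l) (hr₀ : Tendsto (fun i => ‖x i - y₀‖) l (𝓝 r₀))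
    (hr₁ : Tendsto (fun i => ‖x i - y₁‖) l (𝓝 r₁)) : y₀ = y₁ := by
  set c := (‖y₀‖ ^ 2 - ‖y₁‖ ^ 2 + r₁ ^ 2 - r₀ ^ 2) / 2
  have hc : Tendsto (fun i => ⟪x i, y₀ - y₁⟫) l (𝓝 c) := by
    have hpol : ∀ i, ⟪x i, y₀ - y₁⟫
        = (‖y₀‖ ^ 2 - ‖y₁‖ ^ 2 + ‖x i - y₁‖ ^ 2 - ‖x i - y₀‖ ^ 2) / 2 := fun i => by
      rw [inner_sub_right, norm_sub_sq_real, norm_sub_sq_real]; ring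
    simp only [hpol]
    exact ((((hr₁.pow 2).const_add _).sub (hr₀.pow 2)).div_const 2).congr fun i => by ring
  have e₀ : ⟪y₀, y₀ - y₁⟫ = c := tendsto_nhds_unique (h₀ _) (hc.mono_left hl₀)
  have e₁ : ⟪y₁, y₀ - y₁⟫ = c := tendsto_nhds_unique (h₁ _) (hc.mono_left hl₁)
  have : ⟪y₀ - y₁, y₀ - y₁⟫ = 0 := by rw [inner_sub_left, e₀, e₁, sub_self]
  exact sub_eq_zero.1 (inner_self_eq_zero.1 this)

theorem exists_weakTendsto_of_forall_ultrafilter [CompleteSpace H] [l.NeBot] {S : Set H}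
    (hM : ∀ i, ‖x i‖ ≤ M)
    (hS : ∀ p ∈ S, ∃ r, Tendsto (fun i => ‖x i - p‖) l (𝓝 r))
    (hclust : ∀ (𝒰 : Ultrafilter ι) (y : H), ↑𝒰 ≤ l → WeakTendsto x 𝒰 y → y ∈ S) :
    ∃ y ∈ S, WeakTendsto x l y := by
  obtain ⟨𝒰, h𝒰⟩ := Ultrafilter.exists_le l
  obtain ⟨y, hy⟩ := exists_weakTendsto_of_norm_le 𝒰 hM
  have hyS := hclust 𝒰 y h𝒰 hy
  refine ⟨y, hyS, fun v => (tendsto_iff_ultrafilter _ _ _).2 fun 𝒱 h𝒱 => ?_⟩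
  obtain ⟨z, hz⟩ := exists_weakTendsto_of_norm_le 𝒱 hM
  obtain ⟨r, hr⟩ := hS y hyS
  obtain ⟨s, hs⟩ := hS z (hclust 𝒱 z h𝒱 hz)
  rw [hy.eq_of_tendsto_norm_sub hz h𝒰 h𝒱 hr hs]
  exact hz v

end Hilbert

theorem StrongConvexOn.exists_isMinOn {E : Type*} [NormedAddCommGroup E] [NormedSpace ℝ E]
    [CompleteSpace E] {s : Set E} {m : ℝ} {f : E → ℝ} (hf : StrongConvexOn s m f) (hm : 0 < m)
    (hs : IsClosed s) (hne : s.Nonempty) (hcont : ContinuousOn f s) (hbdd : BddBelow (f '' s)) :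
    ∃ p ∈ s, IsMinOn f s p := by
  obtain ⟨u, hu, hlim, hmem⟩ := exists_seq_tendsto_sInf (hne.image f) hbdd
  choose z hzs hzu using hmem
  set μ := sInf (f '' s)
  have hμ : ∀ w ∈ s, μ ≤ f w := fun w hw => csInf_le hbdd ⟨w, hw, rfl⟩
  -- at the midpoint, `m / 8 * ‖z n - z p‖ ^ 2 ≤ (f (z n) + f (z p)) / 2 - μ`
  have hdist : ∀ n p N, N ≤ n → N ≤ p → dist (z n) (z p) ≤ √(8 / m * (u N - μ)) := by
    intro n p N hn hp
    have h₂ : (0 : ℝ) ≤ 1 / 2 := by norm_num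
    have hmid := hf.2 (hzs n) (hzs p) h₂ h₂ (add_halves 1)
    have hmidμ := hμ _ (hf.1 (hzs n) (hzs p) h₂ h₂ (add_halves 1))
    rw [dist_eq_norm, ← Real.sqrt_sq (norm_nonneg _)]
    refine Real.sqrt_le_sqrt ?_
    simp only [smul_eq_mul, hzu] at hmid
    rw [div_mul_eq_mul_div, le_div_iff₀ hm]
    linarith [hu hn, hu hp]
  have hcauchy : CauchySeq z := by
    refine cauchySeq_of_le_tendsto_0 _ hdist ?_
    simpa using ((hlim.sub_const μ).const_mul (8 / m)).sqrt
  obtain ⟨p, hp⟩ := cauchySeq_tendsto_of_complete hcauchy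
  have hps : p ∈ s := hs.mem_of_tendsto hp (Eventually.of_forall hzs)
  have hfp : f p = μ := by
    refine tendsto_nhds_unique ?_ (hlim.congr fun n => (hzu n).symm)
    exact (hcont p hps).tendsto.comp
      (tendsto_nhdsWithin_iff.2 ⟨hp, Eventually.of_forall hzs⟩)
  exact ⟨p, hps, fun w hw => hfp ▸ hμ w hw⟩

section AsymptoticRadius

variable {H : Type*} [NormedAddCommGroup H]

noncomputable def asymptoticRadiusSq (x : ℕ → H) (z : H) : ℝ :=
  limsup (fun k => ‖x k - z‖ ^ 2) atTop

variable {x : ℕ → H} {M : ℝ}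

theorem bddAbove_range_norm_sub_sq (hM : ∀ k, ‖x k‖ ≤ M) (z : H) :
    BddAbove (Set.range fun k => ‖x k - z‖ ^ 2) :=
  ⟨(M + ‖z‖) ^ 2, Set.forall_mem_range.2 fun k => by
    gcongr; exact (norm_sub_le _ _).trans (by linarith [hM k])⟩

theorem isBoundedUnder_norm_sub_sq (hM : ∀ k, ‖x k‖ ≤ M) (z : H) :
    IsBoundedUnder (· ≤ ·) atTop (fun k => ‖x k - z‖ ^ 2) :=
  (bddAbove_range_norm_sub_sq hM z).isBoundedUnder_of_range

theorem isCoboundedUnder_norm_sub_sq (z : H) :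
    IsCoboundedUnder (· ≤ ·) atTop (fun k => ‖x k - z‖ ^ 2) :=
  isCoboundedUnder_le_of_le atTop fun _ => sq_nonneg _

theorem asymptoticRadiusSq_nonneg (hM : ∀ k, ‖x k‖ ≤ M) (z : H) :
    0 ≤ asymptoticRadiusSq x z :=
  le_limsup_of_le (isBoundedUnder_norm_sub_sq hM z) fun _ h =>
    h.exists.elim fun _ hk => (sq_nonneg _).trans hk

theorem strongConvexOn_asymptoticRadiusSq [InnerProductSpace ℝ H] (hM : ∀ k, ‖x k‖ ≤ M)
    {s : Set H} (hs : Convex ℝ s) : StrongConvexOn s 2 (asymptoticRadiusSq x) := by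
  refine ⟨hs, fun z _ w _ a b ha hb hab => ?_⟩
  have h := limsup_le_mul_add_mul_add (c := -(a * b * ‖z - w‖ ^ 2)) ha hb
    (isBoundedUnder_norm_sub_sq hM z) (isBoundedUnder_norm_sub_sq hM w)
    (isCoboundedUnder_norm_sub_sq (a • z + b • w)) fun k => by
      have : x k - (a • z + b • w) = a • (x k - z) + b • (x k - w) := by
        rw [smul_sub, smul_sub, sub_add_sub_comm, ← add_smul, hab, one_smul]
      rw [this, norm_smul_add_smul_sq hab, sub_sub_sub_cancel_left, norm_sub_rev z w]
      linarith
  simp only [asymptoticRadiusSq, smul_eq_mul]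
  linarith

theorem asymptoticRadiusSq_le_add (hM : ∀ k, ‖x k‖ ≤ M) (z w : H) :
    asymptoticRadiusSq x z ≤ asymptoticRadiusSq x w + (2 * M + ‖z‖ + ‖w‖) * ‖z - w‖ := by
  have h := limsup_le_mul_add_mul_add (c := (2 * M + ‖z‖ + ‖w‖) * ‖z - w‖)
    zero_le_one le_rfl
    (isBoundedUnder_norm_sub_sq hM w) (isBoundedUnder_norm_sub_sq hM w)
    (isCoboundedUnder_norm_sub_sq z) fun k => by
      have hdiff : ‖x k - z‖ - ‖x k - w‖ ≤ ‖z - w‖ := by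
        simpa [norm_sub_rev z w] using norm_sub_norm_le (x k - z) (x k - w)
      have hsum : ‖x k - z‖ + ‖x k - w‖ ≤ 2 * M + ‖z‖ + ‖w‖ := by
        linarith [norm_sub_le (x k) z, norm_sub_le (x k) w, hM k]
      nlinarith [norm_nonneg (x k - z), norm_nonneg (x k - w), norm_nonneg (z - w)]
  simpa [asymptoticRadiusSq] using h

theorem continuous_asymptoticRadiusSq (hM : ∀ k, ‖x k‖ ≤ M) :
    Continuous (asymptoticRadiusSq x) := by
  refine continuous_iff_continuousAt.2 fun w => tendsto_iff_norm_sub_tendsto_zero.2 ?_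
  have hK : Tendsto (fun z => (2 * M + ‖z‖ + ‖w‖) * ‖z - w‖) (𝓝 w) (𝓝 0) := by
    simpa using
      (((continuous_const.add continuous_norm).add continuous_const).tendsto w).mul
      (tendsto_iff_norm_sub_tendsto_zero.1 tendsto_id)
  refine squeeze_zero (fun z => norm_nonneg _) (fun z => ?_) hK
  rw [Real.norm_eq_abs, abs_sub_le_iff]
  constructor
  · linarith [asymptoticRadiusSq_le_add hM z w]
  · have h := asymptoticRadiusSq_le_add hM w z
    rw [norm_sub_rev w z] at h
    linarith

end AsymptoticRadius

section KrasnoselskiiMann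

variable {H : Type*} [NormedAddCommGroup H] [InnerProductSpace ℝ H] {C : Set H} {T : H → H}
  {α : ℕ → ℝ} {x : ℕ → H}

theorem km_mem (hCconv : Convex ℝ C) (hTmaps : Set.MapsTo T C C)
    (hα : ∀ k, α k ∈ Set.Icc (0 : ℝ) 1) (hx0 : x 0 ∈ C)
    (hx : ∀ k, x (k + 1) = (1 - α (k + 1)) • x k + α (k + 1) • T (x k)) (k : ℕ) : x k ∈ C := by
  induction k with
  | zero => exact hx0
  | succ k ih =>
    obtain ⟨h₀, h₁⟩ := hα (k + 1)
    rw [hx k]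
    exact hCconv ih (hTmaps ih) (by linarith) h₀ (by ring)

theorem km_norm_sub_sq (hx : ∀ k, x (k + 1) = (1 - α (k + 1)) • x k + α (k + 1) • T (x k))
    (k : ℕ) (z : H) :
    ‖x (k + 1) - z‖ ^ 2 = (1 - α (k + 1)) * ‖x k - z‖ ^ 2 + α (k + 1) * ‖T (x k) - z‖ ^ 2
      - α (k + 1) * (1 - α (k + 1)) * ‖x k - T (x k)‖ ^ 2 := by
  have hcomb : x (k + 1) - z = (1 - α (k + 1)) • (x k - z) + α (k + 1) • (T (x k) - z) := by
    rw [hx k]; module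
  rw [hcomb, norm_smul_add_smul_sq (by ring), sub_sub_sub_cancel_right]
  ring

variable (hT : ∀ u ∈ C, ∀ v ∈ C, ‖T u - T v‖ ≤ ‖u - v‖) (hα : ∀ k, α k ∈ Set.Icc (0 : ℝ) 1)
  (hxC : ∀ k, x k ∈ C) (hx : ∀ k, x (k + 1) = (1 - α (k + 1)) • x k + α (k + 1) • T (x k))
include hT hα hxC hx

theorem km_norm_sub_fixedPoint_sq_le {p : H} (hp : p ∈ C) (hTp : T p = p) (k : ℕ) :
    ‖x (k + 1) - p‖ ^ 2 + α (k + 1) * (1 - α (k + 1)) * ‖x k - T (x k)‖ ^ 2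
      ≤ ‖x k - p‖ ^ 2 := by
  have hTx : ‖T (x k) - p‖ ^ 2 ≤ ‖x k - p‖ ^ 2 := by
    gcongr
    simpa [hTp] using hT _ (hxC k) _ hp
  nlinarith [km_norm_sub_sq hx k p, (hα (k + 1)).1]

theorem km_tendsto_norm_sub_fixedPoint {p : H} (hp : p ∈ C) (hTp : T p = p) :
    ∃ r, Tendsto (fun k => ‖x k - p‖) atTop (𝓝 r) := by
  refine ⟨_, tendsto_atTop_ciInf (antitone_nat_of_succ_le fun k => ?_)
    ⟨0, Set.forall_mem_range.2 fun k => norm_nonneg _⟩⟩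
  have h := km_norm_sub_fixedPoint_sq_le hT hα hxC hx hp hTp k
  obtain ⟨h₀, h₁⟩ := hα (k + 1)
  have : ‖x (k + 1) - p‖ ^ 2 ≤ ‖x k - p‖ ^ 2 := by nlinarith [mul_nonneg h₀ (sub_nonneg.2 h₁)]
  exact (pow_le_pow_iff_left₀ (norm_nonneg _) (norm_nonneg _) two_ne_zero).1 this

theorem km_antitone_norm_sub_map : Antitone fun k => ‖x k - T (x k)‖ := by
  refine antitone_nat_of_succ_le fun k => ?_
  obtain ⟨h₀, h₁⟩ := hα (k + 1)
  have hstep : x k - x (k + 1) = α (k + 1) • (x k - T (x k)) := by rw [hx k]; module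
  have hsplit : x (k + 1) - T (x (k + 1))
      = (1 - α (k + 1)) • (x k - T (x k)) + (T (x k) - T (x (k + 1))) := by rw [hx k]; module
  calc ‖x (k + 1) - T (x (k + 1))‖
      ≤ (1 - α (k + 1)) * ‖x k - T (x k)‖ + ‖x k - x (k + 1)‖ := by
        rw [hsplit]
        refine (norm_add_le _ _).trans (add_le_add ?_ (hT _ (hxC k) _ (hxC (k + 1))))
        rw [norm_smul, Real.norm_of_nonneg (by linarith)]
    _ = ‖x k - T (x k)‖ := by
        rw [hstep, norm_smul, Real.norm_of_nonneg h₀]; ring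

theorem km_tendsto_norm_sub_map
    (hdiv : Tendsto (fun n => ∑ k ∈ range n, α (k + 1) * (1 - α (k + 1))) atTop atTop)
    {p : H} (hp : p ∈ C) (hTp : T p = p) :
    Tendsto (fun k => ‖x k - T (x k)‖) atTop (𝓝 0) := by
  have hβ : ∀ k, 0 ≤ α (k + 1) * (1 - α (k + 1)) := fun k =>
    mul_nonneg (hα _).1 (sub_nonneg.2 (hα _).2)
  have hsq := tendsto_zero_of_antitone_of_sum_mul_le (B := ‖x 0 - p‖ ^ 2)
    (fun k l hkl =>
      pow_le_pow_left₀ (norm_nonneg _) (km_antitone_norm_sub_map hT hα hxC hx hkl) 2)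
    (fun k => sq_nonneg ‖x k - T (x k)‖) hβ hdiv fun n => ?_
  · simpa using hsq.sqrt
  calc ∑ k ∈ range n, α (k + 1) * (1 - α (k + 1)) * ‖x k - T (x k)‖ ^ 2
      ≤ ∑ k ∈ range n, (‖x k - p‖ ^ 2 - ‖x (k + 1) - p‖ ^ 2) :=
        sum_le_sum fun k _ => by linarith [km_norm_sub_fixedPoint_sq_le hT hα hxC hx hp hTp k]
    _ ≤ ‖x 0 - p‖ ^ 2 := by rw [sum_range_sub']; linarith [sq_nonneg ‖x n - p‖]

theorem km_asymptoticRadiusSq_map_le {M : ℝ} (hM : ∀ k, ‖x k‖ ≤ M)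
    (hdiv : Tendsto (fun n => ∑ k ∈ range n, α (k + 1)) atTop atTop) {z : H} (hz : z ∈ C) :
    asymptoticRadiusSq x (T z) ≤ asymptoticRadiusSq x z := by
  refine limsup_le_limsup_of_le_one_sub_mul_add_mul (fun k => hα (k + 1)) hdiv
    ⟨0, Set.forall_mem_range.2 fun k => sq_nonneg _⟩
    (bddAbove_range_norm_sub_sq hM z) fun k => ?_
  obtain ⟨h₀, h₁⟩ := hα (k + 1)
  have hTx : ‖T (x k) - T z‖ ^ 2 ≤ ‖x k - z‖ ^ 2 := by gcongr; exact hT _ (hxC k) _ hz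
  nlinarith [km_norm_sub_sq hx k (T z), mul_nonneg h₀ (sub_nonneg.2 h₁)]

theorem km_exists_fixedPoint [CompleteSpace H] (hC : IsClosed C) (hCconv : Convex ℝ C)
    (hTmaps : Set.MapsTo T C C) {M : ℝ} (hM : ∀ k, ‖x k‖ ≤ M)
    (hdiv : Tendsto (fun n => ∑ k ∈ range n, α (k + 1)) atTop atTop) : ∃ p ∈ C, T p = p := by
  have hF := strongConvexOn_asymptoticRadiusSq hM hCconv
  obtain ⟨p, hp, hmin⟩ := hF.exists_isMinOn two_pos hC ⟨x 0, hxC 0⟩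
    (continuous_asymptoticRadiusSq hM).continuousOn
    ⟨0, Set.forall_mem_image.2 fun z _ => asymptoticRadiusSq_nonneg hM z⟩
  have hTmin : IsMinOn (asymptoticRadiusSq x) C (T p) := fun z hz =>
    (km_asymptoticRadiusSq_map_le hT hα hxC hx hM hdiv hp).trans (hmin hz)
  exact ⟨p, hp, (hF.strictConvexOn two_pos).eq_of_isMinOn hTmin hmin (hTmaps hp) hp⟩

end KrasnoselskiiMann

theorem km_weak_convergence
    {H : Type*} [NormedAddCommGroup H] [InnerProductSpace ℝ H] [CompleteSpace H]
    (C : Set H) (hCclosed : IsClosed C) (hCconv : Convex ℝ C)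
    (T : H → H) (hTmaps : Set.MapsTo T C C)
    (hT : ∀ x ∈ C, ∀ y ∈ C, ‖T x - T y‖ ≤ ‖x - y‖)
    (α : ℕ → ℝ) (hα : ∀ k, α k ∈ Set.Icc (0:ℝ) 1)
    (x : ℕ → H) (hx0 : x 0 ∈ C)
    (hx : ∀ k, x (k + 1) = (1 - α (k + 1)) • x k + α (k + 1) • T (x k))
    (hdiv : Filter.Tendsto (fun n => ∑ k ∈ Finset.Icc 1 n, α k * (1 - α k))
      Filter.atTop Filter.atTop)
    (hbdd : Bornology.IsBounded (Set.range x)) :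
    ∃ y ∈ C, T y = y ∧ ∀ v : H,
      Filter.Tendsto (fun k => (inner ℝ (x k) v : ℝ)) Filter.atTop (nhds (inner ℝ y v)) := by
  obtain ⟨M, hM⟩ := isBounded_iff_forall_norm_le.1 hbdd
  replace hM : ∀ k, ‖x k‖ ≤ M := fun k => hM _ (Set.mem_range_self k)
  have hxC := km_mem hCconv hTmaps hα hx0 hx
  have hdivShift : Tendsto (fun n => ∑ k ∈ range n, α (k + 1) * (1 - α (k + 1))) atTop atTop := by
    refine hdiv.congr fun n => ?_
    rw [← Ico_add_one_right_eq_Icc, sum_Ico_eq_sum_range]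
    simp [add_comm]
  have hdivα : Tendsto (fun n => ∑ k ∈ range n, α (k + 1)) atTop atTop :=
    tendsto_atTop_mono (fun n => sum_le_sum fun k _ =>
      mul_le_of_le_one_right (hα _).1 (by linarith [(hα (k + 1)).1])) hdivShift
  obtain ⟨p, hpC, hTp⟩ := km_exists_fixedPoint hT hα hxC hx hCclosed hCconv hTmaps hM hdivα
  have hreg := km_tendsto_norm_sub_map hT hα hxC hx hdivShift hpC hTp
  obtain ⟨y, ⟨hyC, hTy⟩, hy⟩ :=
    exists_weakTendsto_of_forall_ultrafilter (S := {p ∈ C | T p = p}) hM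
      (fun p hp => km_tendsto_norm_sub_fixedPoint hT hα hxC hx hp.1 hp.2) fun 𝒰 y h𝒰 hy => by
      have hyC := hy.mem_of_isClosed_of_convex hCclosed hCconv hxC
      exact ⟨hyC, hy.map_eq hT hxC hyC hM (hreg.mono_left h𝒰)⟩
  exact ⟨y, hyC, hTy, hy⟩
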